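/- arXiv:2505.10193 — 2 statements merged into one kernel-verified Lean document; each statement's English description precedes it below -/
import Mathlib

section
/- Let Ω•(A) be a complete calculus on a quantum principal bundle B := A^{coH} ⊆ A and let f•: Ω•(H) → Ω•(A) be a k-linear map of degree zero, f• = ⊕_{n≥0} f^n. Then f• is convolution invertible (with respect to the graded coproduct Δ• on Ω•(H) and counit ε•) if and only if its degree-zero component f⁰: H → A is convolution invertible. In particular, a degree-zero map f•: Ω•(H) → Ω•(A) is a graded gauge transformation if and only if f⁰ is a gauge transformation and f• is colinear for the graded adjoint coaction, i.e. Δ_A•∘f• = (f•⊗id)∘Ad•. -/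
open TensorProduct

noncomputable section

namespace QPBPaper

variable (k : Type) [Field k]

/-! ### Convolution algebra -/

/-- Convolution product of linear maps from a coalgebra to an algebra. -/
def conv {C A : Type} [AddCommGroup C] [Module k C] [Coalgebra k C]
    [Ring A] [Algebra k A] (f g : C →ₗ[k] A) : C →ₗ[k] A :=
  LinearMap.mul' k A ∘ₗ TensorProduct.map f g ∘ₗ Coalgebra.comul

/-- Convolution unit `η ∘ ε`. -/
def convUnit {C A : Type} [AddCommGroup C] [Module k C] [Coalgebra k C]
    [Ring A] [Algebra k A] : C →ₗ[k] A :=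
  Algebra.linearMap k A ∘ₗ Coalgebra.counit

def IsConvInvertible {C A : Type} [AddCommGroup C] [Module k C] [Coalgebra k C]
    [Ring A] [Algebra k A] (f : C →ₗ[k] A) : Prop :=
  ∃ g : C →ₗ[k] A, conv k f g = convUnit k ∧ conv k g f = convUnit k

/-! ### Balanced tensor products over (co)invariants -/

section BalQ
variable {Ω : Type} [Ring Ω] [Algebra k Ω]

/-- The `S`-balancing relations inside `Ω ⊗ Ω`. -/
def balQ (S : Set Ω) : Submodule k (Ω ⊗[k] Ω) :=
  Submodule.span k
    {x | ∃ ω η β : Ω, β ∈ S ∧ x = (ω * β) ⊗ₜ[k] η - ω ⊗ₜ[k] (β * η)}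

variable (S : Set Ω)

/-- The balanced tensor product `Ω ⊗_S Ω`. -/
abbrev BQuot := (Ω ⊗[k] Ω) ⧸ balQ k S

/-- Projection to the balanced tensor product. -/
def mkBQ : Ω ⊗[k] Ω →ₗ[k] BQuot k S := Submodule.mkQ (balQ k S)

/-- Left multiplication on the first factor of `Ω ⊗_S Ω`. -/
def lBQ (x : Ω) : BQuot k S →ₗ[k] BQuot k S :=
  Submodule.mapQ _ _ (LinearMap.rTensor Ω (LinearMap.mulLeft k x)) (by
    rw [balQ, Submodule.span_le]
    rintro z ⟨ω, η, β, hβ, rfl⟩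
    simp only [SetLike.mem_coe, Submodule.mem_comap, map_sub, LinearMap.rTensor_tmul,
      LinearMap.mulLeft_apply]
    apply Submodule.subset_span
    exact ⟨x * ω, η, β, hβ, by rw [mul_assoc]⟩)

/-- Right multiplication on the second factor of `Ω ⊗_S Ω`. -/
def rBQ (x : Ω) : BQuot k S →ₗ[k] BQuot k S :=
  Submodule.mapQ _ _ (LinearMap.lTensor Ω (LinearMap.mulRight k x)) (by
    rw [balQ, Submodule.span_le]
    rintro z ⟨ω, η, β, hβ, rfl⟩
    simp only [SetLike.mem_coe, Submodule.mem_comap, map_sub, LinearMap.lTensor_tmul,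
      LinearMap.mulRight_apply]
    apply Submodule.subset_span
    exact ⟨ω, η * x, β, hβ, by rw [mul_assoc]⟩)

/-- The multiplication `Ω ⊗_S Ω → Ω`. -/
def mBQ : BQuot k S →ₗ[k] Ω :=
  Submodule.liftQ _ (LinearMap.mul' k Ω) (by
    rw [balQ, Submodule.span_le]
    rintro z ⟨ω, η, β, hβ, rfl⟩
    simp only [SetLike.mem_coe, LinearMap.mem_ker, map_sub, LinearMap.mul'_apply]
    rw [mul_assoc, sub_self])

/-- The balancing relations in positions `(1,2)` and `(2,3)` of `Ω ⊗ Ω ⊗ Ω`. -/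
def bal3 : Submodule k (Ω ⊗[k] (Ω ⊗[k] Ω)) :=
  Submodule.span k
    ({x | ∃ ω η ζ β : Ω, β ∈ S ∧
        x = (ω * β) ⊗ₜ[k] (η ⊗ₜ[k] ζ) - ω ⊗ₜ[k] ((β * η) ⊗ₜ[k] ζ)} ∪
     {x | ∃ ω η ζ β : Ω, β ∈ S ∧
        x = ω ⊗ₜ[k] ((η * β) ⊗ₜ[k] ζ) - ω ⊗ₜ[k] (η ⊗ₜ[k] (β * ζ))})

/-- The triple balanced tensor product `Ω ⊗_S Ω ⊗_S Ω`. -/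
abbrev TQuot := (Ω ⊗[k] (Ω ⊗[k] Ω)) ⧸ bal3 k S

/-- Projection to the triple balanced tensor product. -/
def mkTQ : Ω ⊗[k] (Ω ⊗[k] Ω) →ₗ[k] TQuot k S := Submodule.mkQ (bal3 k S)

/-- Tensoring on the right by `z`: `Ω ⊗_S Ω → Ω ⊗_S Ω ⊗_S Ω`. -/
def g12 (z : Ω) : BQuot k S →ₗ[k] TQuot k S :=
  Submodule.mapQ _ _ (LinearMap.lTensor Ω ((TensorProduct.mk k Ω Ω).flip z)) (by
    rw [balQ, Submodule.span_le]
    rintro w ⟨ω, η, β, hβ, rfl⟩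
    simp only [SetLike.mem_coe, Submodule.mem_comap, map_sub, LinearMap.lTensor_tmul,
      TensorProduct.mk_apply, LinearMap.flip_apply]
    apply Submodule.subset_span
    exact Or.inl ⟨ω, η, z, β, hβ, rfl⟩)

/-- Tensoring on the left by `x`: `Ω ⊗_S Ω → Ω ⊗_S Ω ⊗_S Ω`. -/
def g23 (x : Ω) : BQuot k S →ₗ[k] TQuot k S :=
  Submodule.mapQ _ _ (TensorProduct.mk k Ω (Ω ⊗[k] Ω) x) (by
    rw [balQ, Submodule.span_le]
    rintro w ⟨ω, η, β, hβ, rfl⟩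
    simp only [SetLike.mem_coe, Submodule.mem_comap, map_sub, TensorProduct.mk_apply,
      TensorProduct.tmul_sub]
    apply Submodule.subset_span
    exact Or.inr ⟨x, ω, η, β, hβ, rfl⟩)

/-- Multiplication of the first two factors `Ω ⊗_S Ω ⊗_S Ω → Ω ⊗_S Ω`. -/
def m12 : TQuot k S →ₗ[k] BQuot k S :=
  Submodule.liftQ _ (mkBQ k S ∘ₗ LinearMap.rTensor Ω (LinearMap.mul' k Ω) ∘ₗ
      (TensorProduct.assoc k Ω Ω Ω).symm.toLinearMap) (by
    rw [bal3, Submodule.span_le]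
    rintro w (⟨ω, η, ζ, β, hβ, rfl⟩ | ⟨ω, η, ζ, β, hβ, rfl⟩) <;>
      simp only [SetLike.mem_coe, LinearMap.mem_ker, map_sub, LinearMap.comp_apply,
        LinearEquiv.coe_coe, TensorProduct.assoc_symm_tmul, LinearMap.rTensor_tmul,
        LinearMap.mul'_apply, TensorProduct.tmul_sub, map_sub]
    · rw [mul_assoc, sub_self]
    · rw [mkBQ, Submodule.mkQ_apply, Submodule.mkQ_apply, ← Submodule.Quotient.mk_sub,
        Submodule.Quotient.mk_eq_zero]
      apply Submodule.subset_span
      exact ⟨ω * η, ζ, β, hβ, by rw [mul_assoc]⟩)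

/-- Multiplication of the last two factors `Ω ⊗_S Ω ⊗_S Ω → Ω ⊗_S Ω`. -/
def m23 : TQuot k S →ₗ[k] BQuot k S :=
  Submodule.liftQ _ (mkBQ k S ∘ₗ LinearMap.lTensor Ω (LinearMap.mul' k Ω)) (by
    rw [bal3, Submodule.span_le]
    rintro w (⟨ω, η, ζ, β, hβ, rfl⟩ | ⟨ω, η, ζ, β, hβ, rfl⟩) <;>
      simp only [SetLike.mem_coe, LinearMap.mem_ker, map_sub, LinearMap.comp_apply,
        LinearMap.lTensor_tmul, LinearMap.mul'_apply]
    · rw [mkBQ, Submodule.mkQ_apply, Submodule.mkQ_apply, ← Submodule.Quotient.mk_sub,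
        Submodule.Quotient.mk_eq_zero]
      apply Submodule.subset_span
      exact ⟨ω, η * ζ, β, hβ, by rw [mul_assoc]⟩
    · rw [mul_assoc, sub_self])

end BalQ


/-! ### Comodule algebras and Hopf–Galois extensions -/

/-- A right `H`-comodule algebra structure on `A`. -/
structure ComodAlg (H A : Type) [Ring H] [Bialgebra k H] [Ring A] [Algebra k A] where
  ρ : A →ₗ[k] A ⊗[k] H
  ρ_one : ρ 1 = 1
  ρ_mul : ∀ a b : A, ρ (a * b) = ρ a * ρ b
  counit_ρ : ∀ a : A,
    TensorProduct.rid k A (LinearMap.lTensor A (Coalgebra.counit (R := k) (A := H)) (ρ a)) = a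
  coassoc_ρ : ∀ a : A,
    TensorProduct.assoc k A H H (LinearMap.rTensor H ρ (ρ a))
      = LinearMap.lTensor A (Coalgebra.comul (R := k) (A := H)) (ρ a)

variable {k}

/-- The subalgebra of coinvariant elements `B = A^{co H}`. -/
def ComodAlg.coinv {H A : Type} [Ring H] [Bialgebra k H] [Ring A] [Algebra k A]
    (c : ComodAlg k H A) : Subalgebra k A where
  carrier := {a : A | c.ρ a = a ⊗ₜ[k] (1 : H)}
  mul_mem' := by
    intro a b ha hb
    simp only [Set.mem_setOf_eq] at *
    rw [c.ρ_mul, ha, hb, Algebra.TensorProduct.tmul_mul_tmul, mul_one]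
  one_mem' := by
    simpa [Algebra.TensorProduct.one_def] using c.ρ_one
  add_mem' := by
    intro a b ha hb
    simp only [Set.mem_setOf_eq] at *
    rw [map_add, ha, hb, TensorProduct.add_tmul]
  algebraMap_mem' := by
    intro r
    show c.ρ (algebraMap k A r) = algebraMap k A r ⊗ₜ[k] (1 : H)
    rw [Algebra.algebraMap_eq_smul_one, map_smul, c.ρ_one,
      Algebra.TensorProduct.one_def, smul_tmul']

lemma ComodAlg.mem_coinv {H A : Type} [Ring H] [Bialgebra k H] [Ring A] [Algebra k A]
    (c : ComodAlg k H A) {a : A} : a ∈ c.coinv ↔ c.ρ a = a ⊗ₜ[k] (1 : H) := Iff.rfl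

variable (k)

/-- The `B`-balancing relations inside `A ⊗ A`. -/
def balancer {H A : Type} [Ring H] [Bialgebra k H] [Ring A] [Algebra k A]
    (c : ComodAlg k H A) : Submodule k (A ⊗[k] A) :=
  balQ k (c.coinv : Set A)

/-- The balanced tensor product `A ⊗_B A`. -/
abbrev AtB {H A : Type} [Ring H] [Bialgebra k H] [Ring A] [Algebra k A]
    (c : ComodAlg k H A) : Type :=
  (A ⊗[k] A) ⧸ balancer k c

/-- Projection `A ⊗ A → A ⊗_B A`. -/
def mkAtB {H A : Type} [Ring H] [Bialgebra k H] [Ring A] [Algebra k A]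
    (c : ComodAlg k H A) : A ⊗[k] A →ₗ[k] AtB k c :=
  Submodule.mkQ (balancer k c)

/-- The Galois map before descending to `A ⊗_B A`. -/
def chi0 {H A : Type} [Ring H] [Bialgebra k H] [Ring A] [Algebra k A]
    (c : ComodAlg k H A) : A ⊗[k] A →ₗ[k] A ⊗[k] H :=
  LinearMap.mul' k (A ⊗[k] H) ∘ₗ
    TensorProduct.map (Algebra.TensorProduct.includeLeft (R := k) (S := k)
      (A := A) (B := H)).toLinearMap c.ρ

lemma chi0_tmul {H A : Type} [Ring H] [Bialgebra k H] [Ring A] [Algebra k A]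
    (c : ComodAlg k H A) (x y : A) :
    chi0 k c (x ⊗ₜ[k] y) = (x ⊗ₜ[k] (1 : H)) * c.ρ y := by
  simp [chi0]

lemma balancer_le_ker_chi0 {H A : Type} [Ring H] [Bialgebra k H] [Ring A] [Algebra k A]
    (c : ComodAlg k H A) : balancer k c ≤ LinearMap.ker (chi0 k c) := by
  rw [balancer, balQ, Submodule.span_le]
  rintro x ⟨a, y, b, hb, rfl⟩
  rw [SetLike.mem_coe] at hb
  rw [SetLike.mem_coe, LinearMap.mem_ker, map_sub, chi0_tmul, chi0_tmul,
    c.ρ_mul, c.mem_coinv.mp hb, ← mul_assoc, Algebra.TensorProduct.tmul_mul_tmul,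
    mul_one, sub_self]

/-- The canonical Galois map `χ : A ⊗_B A → A ⊗ H`. -/
def chiQ {H A : Type} [Ring H] [Bialgebra k H] [Ring A] [Algebra k A]
    (c : ComodAlg k H A) : AtB k c →ₗ[k] A ⊗[k] H :=
  Submodule.liftQ (balancer k c) (chi0 k c) (balancer_le_ker_chi0 k c)

/-! ### Faithful flatness over the coinvariant subalgebra -/

/-- `B`-balancing relations in `A ⊗ M` for a left `B`-module `M`. -/
def relBalancer {A : Type} [Ring A] [Algebra k A] (B : Subalgebra k A)
    (M : Type) [AddCommGroup M] [Module k M] [Module B M] [IsScalarTower k B M] :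
    Submodule k (A ⊗[k] M) :=
  Submodule.span k
    {x | ∃ (a : A) (b : B) (m : M), x = (a * (b : A)) ⊗ₜ[k] m - a ⊗ₜ[k] (b • m)}

/-- `A` is a faithfully flat right `B`-module: tensoring over `B` preserves and
reflects injectivity resp. nontriviality. -/
def IsFaithfullyFlatOver {A : Type} [Ring A] [Algebra k A] (B : Subalgebra k A) : Prop :=
  (∀ (M N : Type) [AddCommGroup M] [Module k M] [Module B M] [IsScalarTower k B M]
      [AddCommGroup N] [Module k N] [Module B N] [IsScalarTower k B N]
      (f : M →ₗ[B] N), Function.Injective f →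
      ∀ x : A ⊗[k] M,
        LinearMap.lTensor A (f.restrictScalars k) x ∈ relBalancer k B N →
          x ∈ relBalancer k B M) ∧
  (∀ (M : Type) [AddCommGroup M] [Module k M] [Module B M] [IsScalarTower k B M],
      (⊥ : Submodule k M) ≠ ⊤ → relBalancer k B M ≠ ⊤)

/-- A quantum principal bundle: a faithfully flat Hopf–Galois extension. -/
structure QPB (H A : Type) [Ring H] [HopfAlgebra k H] [Ring A] [Algebra k A]
    extends ComodAlg k H A where
  antipode_bij : Function.Bijective (HopfAlgebra.antipode (R := k) (A := H))
  galois : Function.Bijective (chiQ k toComodAlg)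
  ff : IsFaithfullyFlatOver k toComodAlg.coinv


/-- An (ℕ-graded) differential graded algebra over `k`. -/
structure GDA where
  Ω : Type
  [ring : Ring Ω]
  [alg : Algebra k Ω]
  gr : ℕ → Submodule k Ω
  [graded : GradedAlgebra gr]
  d : Ω →ₗ[k] Ω
  d_d : ∀ x, d (d x) = 0
  d_mem : ∀ n, ∀ x ∈ gr n, d x ∈ gr (n + 1)
  leibniz : ∀ n, ∀ x ∈ gr n, ∀ y, d (x * y) = d x * y + ((-1 : k) ^ n) • (x * d y)

attribute [instance] GDA.ring GDA.alg GDA.graded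

/-- A differential calculus on the algebra `A`: a DGA with `Ω⁰ = A` which is
generated in the sense `Ωⁿ = span { a⁰ da¹ ∧ ⋯ ∧ daⁿ }`. -/
structure DC (A : Type) [Ring A] [Algebra k A] extends GDA k where
  ι : A →ₐ[k] Ω
  ι_inj : Function.Injective ι
  gr_zero : gr 0 = LinearMap.range ι.toLinearMap
  gr_succ : ∀ n : ℕ, gr (n + 1) = Submodule.span k
    {x | ∃ (a : A) (f : Fin (n + 1) → A),
      x = ι a * (List.ofFn fun i => d (ι (f i))).prod}

variable {k}

/-- The Koszul sign operator `J x = (-1)^{|x|} x`. -/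
def GDA.J (D : GDA k) : D.Ω →ₗ[k] D.Ω :=
  (DirectSum.toModule k ℕ D.Ω fun n => ((-1 : k) ^ n) • (D.gr n).subtype) ∘ₗ
    (DirectSum.decomposeLinearEquiv D.gr).toLinearMap

/-- The Koszul braiding flip `x ⊗ y ↦ (-1)^{|x||y|} y ⊗ x`. -/
def koszulFlip (D E : GDA k) : D.Ω ⊗[k] E.Ω →ₗ[k] E.Ω ⊗[k] D.Ω :=
  (DirectSum.toModule k ℕ (E.Ω ⊗[k] D.Ω) fun n =>
      (TensorProduct.comm k D.Ω E.Ω).toLinearMap ∘ₗ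
        TensorProduct.map (D.gr n).subtype (E.J ^ n)) ∘ₗ
    (TensorProduct.directSumLeft k k (fun n => D.gr n) E.Ω).toLinearMap ∘ₗ
    LinearMap.rTensor E.Ω (DirectSum.decomposeLinearEquiv D.gr).toLinearMap

/-- Multiplication of the graded (Koszul-signed) tensor product algebra
`Ω(D) ⊗ Ω(E)`: `(x ⊗ h)(y ⊗ g) = (-1)^{|h||y|} (xy) ⊗ (hg)`. -/
def gmulT (D E : GDA k) :
    (D.Ω ⊗[k] E.Ω) ⊗[k] (D.Ω ⊗[k] E.Ω) →ₗ[k] D.Ω ⊗[k] E.Ω :=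
  TensorProduct.map (LinearMap.mul' k D.Ω) (LinearMap.mul' k E.Ω) ∘ₗ
    (TensorProduct.assoc k D.Ω D.Ω (E.Ω ⊗[k] E.Ω)).symm.toLinearMap ∘ₗ
    LinearMap.lTensor D.Ω (TensorProduct.assoc k D.Ω E.Ω E.Ω).toLinearMap ∘ₗ
    LinearMap.lTensor D.Ω (LinearMap.rTensor E.Ω (koszulFlip E D)) ∘ₗ
    LinearMap.lTensor D.Ω (TensorProduct.assoc k E.Ω D.Ω E.Ω).symm.toLinearMap ∘ₗ
    (TensorProduct.assoc k D.Ω E.Ω (D.Ω ⊗[k] E.Ω)).toLinearMap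

/-- The differential of the graded tensor product:
`d⊗(x ⊗ y) = dx ⊗ y + (-1)^{|x|} x ⊗ dy`. -/
def dT (D E : GDA k) : D.Ω ⊗[k] E.Ω →ₗ[k] D.Ω ⊗[k] E.Ω :=
  LinearMap.rTensor E.Ω D.d + TensorProduct.map D.J E.d

/-- Projection of a differential calculus onto its degree-zero part `A`. -/
def DC.p0 {A : Type} [Ring A] [Algebra k A] (D : DC k A) : D.Ω →ₗ[k] A :=
  (LinearEquiv.ofInjective D.ι.toLinearMap D.ι_inj).symm.toLinearMap ∘ₗ
    (LinearEquiv.ofEq _ _ D.gr_zero).toLinearMap ∘ₗ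
    DirectSum.component k ℕ (fun n => D.gr n) 0 ∘ₗ
    (DirectSum.decomposeLinearEquiv D.gr).toLinearMap


variable (k)

/-! ### First order differential calculi -/

/-- A first order differential calculus `(Ω¹(A), d)` on `A`, realized on the
`A`-bimodule `V`. -/
structure FODC (A V : Type) [Ring A] [Algebra k A] [AddCommGroup V] [Module k V] where
  lact : A →ₗ[k] V →ₗ[k] V
  ract : A →ₗ[k] V →ₗ[k] V
  lact_one : lact 1 = LinearMap.id
  lact_mul : ∀ a b : A, lact (a * b) = lact a ∘ₗ lact b
  ract_one : ract 1 = LinearMap.id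
  ract_mul : ∀ a b : A, ract (a * b) = ract b ∘ₗ ract a
  lr_comm : ∀ (a b : A) (v : V), lact a (ract b v) = ract b (lact a v)
  d : A →ₗ[k] V
  leibniz : ∀ a b : A, d (a * b) = lact a (d b) + ract b (d a)
  span_eq : Submodule.span k {x : V | ∃ a b : A, x = lact a (d b)} = ⊤

/-- Auxiliary action of `A ⊗ H` on `V ⊗ H`:
`(a ⊗ h) ⋅ (v ⊗ g) = (act a v) ⊗ (mulH h g)`. -/
def actT {A H V : Type} [AddCommGroup A] [Module k A] [AddCommGroup H] [Module k H]
    [AddCommGroup V] [Module k V]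
    (act : A →ₗ[k] V →ₗ[k] V) (mulH : H →ₗ[k] H →ₗ[k] H) :
    A ⊗[k] H →ₗ[k] (V ⊗[k] H) →ₗ[k] V ⊗[k] H :=
  TensorProduct.lift ((TensorProduct.mapBilinear (RingHom.id k) V H V H).compl₁₂ act mulH)

/-- Auxiliary action of `H ⊗ A` on `H ⊗ V`:
`(h ⊗ a) ⋅ (g ⊗ v) = (mulH h g) ⊗ (act a v)`. -/
def actTL {A H V : Type} [AddCommGroup A] [Module k A] [AddCommGroup H] [Module k H]
    [AddCommGroup V] [Module k V]
    (act : A →ₗ[k] V →ₗ[k] V) (mulH : H →ₗ[k] H →ₗ[k] H) :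
    H ⊗[k] A →ₗ[k] (H ⊗[k] V) →ₗ[k] H ⊗[k] V :=
  TensorProduct.lift ((TensorProduct.mapBilinear (RingHom.id k) H V H V).compl₁₂ mulH act)

section Covariant
variable {H A : Type} [Ring H] [Bialgebra k H] [Ring A] [Algebra k A]

/-- A right `H`-covariant FODC on the right `H`-comodule algebra `A`. -/
structure RCovFODC (c : ComodAlg k H A) (V : Type) [AddCommGroup V] [Module k V]
    extends FODC k A V where
  ρV : V →ₗ[k] V ⊗[k] H
  ρV_counit : ∀ v, TensorProduct.rid k V
    (LinearMap.lTensor V (Coalgebra.counit (R := k) (A := H)) (ρV v)) = v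
  ρV_coassoc : ∀ v, TensorProduct.assoc k V H H (LinearMap.rTensor H ρV (ρV v))
    = LinearMap.lTensor V (Coalgebra.comul (R := k) (A := H)) (ρV v)
  ρV_d : ∀ a : A, ρV (d a) = LinearMap.rTensor H d (c.ρ a)
  ρV_l : ∀ (a : A) (v : V),
    ρV (lact a v) = actT k lact (LinearMap.mul k H) (c.ρ a) (ρV v)
  ρV_r : ∀ (a : A) (v : V),
    ρV (ract a v) = actT k ract ((LinearMap.mul k H).flip) (c.ρ a) (ρV v)

/-- A left `H`-covariant FODC on the Hopf algebra `H` itself. -/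
structure LCovFODC (V : Type) [AddCommGroup V] [Module k V]
    extends FODC k H V where
  lam : V →ₗ[k] H ⊗[k] V
  lam_counit : ∀ v, TensorProduct.lid k V
    (LinearMap.rTensor V (Coalgebra.counit (R := k) (A := H)) (lam v)) = v
  lam_coassoc : ∀ v, (TensorProduct.assoc k H H V).symm
      (LinearMap.lTensor H lam (lam v))
    = LinearMap.rTensor V (Coalgebra.comul (R := k) (A := H)) (lam v)
  lam_d : ∀ h : H, lam (d h) = LinearMap.lTensor H d (Coalgebra.comul (R := k) h)
  lam_l : ∀ (h : H) (v : V), lam (lact h v)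
    = actTL k lact (LinearMap.mul k H) (Coalgebra.comul (R := k) h) (lam v)
  lam_r : ∀ (h : H) (v : V), lam (ract h v)
    = actTL k ract ((LinearMap.mul k H).flip) (Coalgebra.comul (R := k) h) (lam v)

/-- The right coaction data making a left covariant FODC on `H` bicovariant. -/
structure BicovStruct {V : Type} [AddCommGroup V] [Module k V]
    (L : LCovFODC k (H := H) V) where
  ρV : V →ₗ[k] V ⊗[k] H
  ρV_counit : ∀ v, TensorProduct.rid k V
    (LinearMap.lTensor V (Coalgebra.counit (R := k) (A := H)) (ρV v)) = v
  ρV_coassoc : ∀ v, TensorProduct.assoc k V H H (LinearMap.rTensor H ρV (ρV v))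
    = LinearMap.lTensor V (Coalgebra.comul (R := k) (A := H)) (ρV v)
  ρV_d : ∀ h : H, ρV (L.d h) = LinearMap.rTensor H L.d (Coalgebra.comul (R := k) h)
  ρV_l : ∀ (h : H) (v : V),
    ρV (L.lact h v) = actT k L.lact (LinearMap.mul k H) (Coalgebra.comul (R := k) h) (ρV v)
  ρV_r : ∀ (h : H) (v : V),
    ρV (L.ract h v) = actT k L.ract ((LinearMap.mul k H).flip) (Coalgebra.comul (R := k) h) (ρV v)
  bicomod : ∀ v, LinearMap.lTensor H ρV (L.lam v)
    = TensorProduct.assoc k H V H (LinearMap.rTensor H L.lam (ρV v))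

end Covariant

/-! ### Maximal prolongations -/

section MaxProl
variable {k}
variable {A : Type} [Ring A] [Algebra k A]

/-- A realization of a DC as an extension of a given FODC. -/
structure ExtendsFODC {V : Type} [AddCommGroup V] [Module k V]
    (D : DC k A) (F : FODC k A V) where
  j : V →ₗ[k] D.Ω
  j_inj : Function.Injective j
  j_range : LinearMap.range j = D.gr 1
  j_d : ∀ a : A, j (F.d a) = D.d (D.ι a)
  j_l : ∀ (a : A) (v : V), j (F.lact a v) = D.ι a * j v
  j_r : ∀ (a : A) (v : V), j (F.ract a v) = j v * D.ι a

/-- `D` is the maximal prolongation of the FODC `F`: it extends `F` and every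
other extension is a quotient of it. -/
def IsMaxProlongation {V : Type} [AddCommGroup V] [Module k V]
    (D : DC k A) (F : FODC k A V) : Prop :=
  Nonempty (ExtendsFODC D F) ∧
  ∀ (D' : DC k A) (e : ExtendsFODC D F) (e' : ExtendsFODC D' F),
    ∃ φ : D.Ω →ₐ[k] D'.Ω, Function.Surjective φ ∧
      (∀ a : A, φ (D.ι a) = D'.ι a) ∧
      (∀ x, φ (D.d x) = D'.d (φ x)) ∧
      (∀ n, ∀ x ∈ D.gr n, φ x ∈ D'.gr n) ∧
      (∀ v : V, φ (e.j v) = e'.j v)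

end MaxProl

/-! ### The adjoint coaction and graded Hopf calculi -/

section HopfSide
variable {k}
variable {H : Type} [Ring H] [HopfAlgebra k H]

/-- The (right) adjoint coaction `Ad(h) = h₂ ⊗ S(h₁) h₃`. -/
def AdMap : H →ₗ[k] H ⊗[k] H :=
  LinearMap.lTensor H (LinearMap.mul' k H) ∘ₗ
    (TensorProduct.assoc k H H H).toLinearMap ∘ₗ
    LinearMap.rTensor H ((TensorProduct.comm k H H).toLinearMap ∘ₗ
      LinearMap.rTensor H (HopfAlgebra.antipode (R := k))) ∘ₗ
    LinearMap.rTensor H (Coalgebra.comul (R := k)) ∘ₗ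
    Coalgebra.comul (R := k)

variable (k) in
/-- A differential calculus on `H` which is a differential graded Hopf algebra,
as is the case for the maximal prolongation of a bicovariant FODC. -/
structure DGHopf extends DC k H where
  Δg : Ω →ₗ[k] Ω ⊗[k] Ω
  εg : Ω →ₗ[k] k
  Sg : Ω →ₗ[k] Ω
  Δg_one : Δg 1 = 1 ⊗ₜ[k] 1
  Δg_mul : ∀ x y : Ω, Δg (x * y) = gmulT toGDA toGDA (Δg x ⊗ₜ[k] Δg y)
  Δg_d : ∀ x : Ω, Δg (d x) = dT toGDA toGDA (Δg x)
  Δg_zero : ∀ h : H, Δg (ι h)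
    = TensorProduct.map ι.toLinearMap ι.toLinearMap (Coalgebra.comul (R := k) h)
  Δg_coassoc : ∀ x : Ω, TensorProduct.assoc k Ω Ω Ω (LinearMap.rTensor Ω Δg (Δg x))
    = LinearMap.lTensor Ω Δg (Δg x)
  Δg_counit_l : ∀ x : Ω, TensorProduct.lid k Ω (LinearMap.rTensor Ω εg (Δg x)) = x
  Δg_counit_r : ∀ x : Ω, TensorProduct.rid k Ω (LinearMap.lTensor Ω εg (Δg x)) = x
  εg_zero : ∀ h : H, εg (ι h) = Coalgebra.counit (R := k) h
  εg_pos : ∀ n, ∀ x ∈ gr (n + 1), εg x = 0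
  Sg_antipode_l : ∀ x : Ω,
    LinearMap.mul' k Ω (TensorProduct.map Sg LinearMap.id (Δg x)) = algebraMap k Ω (εg x)
  Sg_antipode_r : ∀ x : Ω,
    LinearMap.mul' k Ω (TensorProduct.map LinearMap.id Sg (Δg x)) = algebraMap k Ω (εg x)
  Sg_zero : ∀ h : H, Sg (ι h) = ι (HopfAlgebra.antipode (R := k) h)
  Sg_d : ∀ x : Ω, Sg (d x) = d (Sg x)
  Δg_grade : ∀ n, ∀ x ∈ gr n, Δg x ∈
    ⨆ p : {p : ℕ × ℕ // p.1 + p.2 = n},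
      LinearMap.range (TensorProduct.map (gr p.1.1).subtype (gr p.1.2).subtype)

namespace DGHopf

variable (D : DGHopf k (H := H))

/-- The left coaction of `H` on `Ω•(H)`, i.e. the degree `(0,•)` part of `Δg`. -/
def lamG : D.Ω →ₗ[k] H ⊗[k] D.Ω :=
  TensorProduct.map D.p0 LinearMap.id ∘ₗ D.Δg

/-- The left coinvariant forms `Λ• ⊆ Ω•(H)`. -/
def lamSub : Submodule k D.Ω :=
  LinearMap.ker (D.lamG - TensorProduct.mk k H D.Ω 1)

/-- The left coinvariant one-forms `Λ¹`. -/
def lam1 : Submodule k D.Ω := D.lamSub ⊓ D.gr 1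

/-- The (quantum) Cartan–Maurer form `ϖ(h) = S(h₁) d(h₂)`, extended to `H`. -/
def varpi : H →ₗ[k] D.Ω :=
  TensorProduct.lift
    (((LinearMap.mul k D.Ω ∘ₗ D.ι.toLinearMap ∘ₗ
        (HopfAlgebra.antipode (R := k))).compl₂ (D.d ∘ₗ D.ι.toLinearMap))) ∘ₗ
    Coalgebra.comul (R := k)

/-- The graded adjoint coaction
`Ad•(ω) = (-1)^{|ω₁||ω₂|} ω₂ ⊗ S•(ω₁) ∧ ω₃`. -/
def AdG : D.Ω →ₗ[k] D.Ω ⊗[k] D.Ω :=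
  LinearMap.lTensor D.Ω (LinearMap.mul' k D.Ω ∘ₗ LinearMap.rTensor D.Ω D.Sg) ∘ₗ
    (TensorProduct.assoc k D.Ω D.Ω D.Ω).toLinearMap ∘ₗ
    LinearMap.rTensor D.Ω (koszulFlip D.toGDA D.toGDA) ∘ₗ
    LinearMap.rTensor D.Ω D.Δg ∘ₗ D.Δg

end DGHopf
end HopfSide

/-! ### Complete calculi -/

section Complete
variable {k}
variable {H A : Type} [Ring H] [HopfAlgebra k H] [Ring A] [Algebra k A]

variable (k) in
/-- A complete calculus: the coaction of a comodule algebra extends to a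
morphism of differential graded algebras `Ω•(A) → Ω•(A) ⊗ Ω•(H)`. -/
structure Complete (c : ComodAlg k H A) (DA : DC k A) (DH : DGHopf k (H := H)) where
  Δc : DA.Ω →ₗ[k] DA.Ω ⊗[k] DH.Ω
  Δc_one : Δc 1 = 1 ⊗ₜ[k] 1
  Δc_mul : ∀ x y : DA.Ω, Δc (x * y) = gmulT DA.toGDA DH.toGDA (Δc x ⊗ₜ[k] Δc y)
  Δc_d : ∀ x : DA.Ω, Δc (DA.d x) = dT DA.toGDA DH.toGDA (Δc x)
  Δc_zero : ∀ a : A, Δc (DA.ι a)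
    = TensorProduct.map DA.ι.toLinearMap DH.ι.toLinearMap (c.ρ a)
  Δc_grade : ∀ n, ∀ x ∈ DA.gr n, Δc x ∈
    ⨆ p : {p : ℕ × ℕ // p.1 + p.2 = n},
      LinearMap.range (TensorProduct.map (DA.gr p.1.1).subtype (DH.gr p.1.2).subtype)

namespace Complete

variable {c : ComodAlg k H A} {DA : DC k A} {DH : DGHopf k (H := H)}
variable (E : Complete k c DA DH)

/-- The first order part of the extended coaction: a right `H`-coaction on `Ω•(A)`. -/
def ρΩ : DA.Ω →ₗ[k] DA.Ω ⊗[k] H :=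
  LinearMap.lTensor DA.Ω DH.p0 ∘ₗ E.Δc

/-- The basic forms `Ω•(B) = Ω•(A)^{co Ω•(H)}`. -/
def basic : Submodule k DA.Ω :=
  LinearMap.ker (E.Δc - (TensorProduct.mk k DA.Ω DH.Ω).flip 1)

/-- The horizontal forms `hor• = (Δ•)⁻¹(Ω•(A) ⊗ H)`. -/
def hor : Submodule k DA.Ω :=
  Submodule.comap E.Δc (LinearMap.range (LinearMap.lTensor DA.Ω DH.ι.toLinearMap))

end Complete

/-- The map `κ : a ⊗ ω ↦ a₀ ⊗ S(a₁) ω`. -/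
def kappa (c : ComodAlg k H A) (DH : DGHopf k (H := H)) :
    A ⊗[k] DH.Ω →ₗ[k] A ⊗[k] DH.Ω :=
  LinearMap.lTensor A (LinearMap.mul' k DH.Ω ∘ₗ
      LinearMap.rTensor DH.Ω (DH.ι.toLinearMap ∘ₗ HopfAlgebra.antipode (R := k))) ∘ₗ
    (TensorProduct.assoc k A H DH.Ω).toLinearMap ∘ₗ
    LinearMap.rTensor DH.Ω c.ρ

namespace Complete
variable {c : ComodAlg k H A} {DA : DC k A} {DH : DGHopf k (H := H)}
variable (E : Complete k c DA DH)

/-- The vertical projection `π_v : Ω•(A) → A ⊗ Λ• ⊆ A ⊗ Ω•(H)`. -/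
def piv : DA.Ω →ₗ[k] A ⊗[k] DH.Ω :=
  kappa c DH ∘ₗ TensorProduct.map DA.p0 LinearMap.id ∘ₗ E.Δc

end Complete
end Complete

/-! ### The Đurđević braiding via the Galois map -/

section Durd
variable {k}
variable {H A : Type} [Ring H] [HopfAlgebra k H] [Ring A] [Algebra k A]

/-- The map `a ⊗ c ↦ a₀ c ⊗ a₁`, i.e. `χ ∘ σ` for the Đurđević braiding. -/
def durdGalois (c : ComodAlg k H A) : A ⊗[k] A →ₗ[k] A ⊗[k] H :=
  LinearMap.rTensor H (LinearMap.mul' k A) ∘ₗ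
    (TensorProduct.assoc k A A H).symm.toLinearMap ∘ₗ
    LinearMap.lTensor A (TensorProduct.comm k H A).toLinearMap ∘ₗ
    (TensorProduct.assoc k A H A).toLinearMap ∘ₗ
    LinearMap.rTensor A c.ρ

/-- The graded analogue `ω ⊗ η ↦ (-1)^{|η||ω₁|} (ω₀ ∧ η) ⊗ ω₁`, i.e.
`χ• ∘ σ•` for the extended Đurđević braiding. -/
def durdGaloisG {c : ComodAlg k H A} {DA : DC k A} {DH : DGHopf k (H := H)}
    (E : Complete k c DA DH) : DA.Ω ⊗[k] DA.Ω →ₗ[k] DA.Ω ⊗[k] DH.Ω :=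
  LinearMap.rTensor DH.Ω (LinearMap.mul' k DA.Ω) ∘ₗ
    (TensorProduct.assoc k DA.Ω DA.Ω DH.Ω).symm.toLinearMap ∘ₗ
    LinearMap.lTensor DA.Ω (koszulFlip DH.toGDA DA.toGDA) ∘ₗ
    (TensorProduct.assoc k DA.Ω DH.Ω DA.Ω).toLinearMap ∘ₗ
    LinearMap.rTensor DA.Ω E.Δc

end Durd

/-! ### Gauge transformations and connections -/

section Gauge
variable {k}
variable {H A : Type} [Ring H] [HopfAlgebra k H] [Ring A] [Algebra k A]

/-- A gauge transformation: unital, convolution invertible, and colinear with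
respect to the adjoint coaction. -/
def IsGauge (c : ComodAlg k H A) (f : H →ₗ[k] A) : Prop :=
  IsConvInvertible k f ∧ f 1 = 1 ∧
    ∀ h : H, c.ρ (f h) = LinearMap.rTensor H f (AdMap h)

/-- A vertical automorphism: a unital left `B`-linear right `H`-colinear
bijection of `A`. -/
def IsVertAut (c : ComodAlg k H A) (F : A →ₗ[k] A) : Prop :=
  Function.Bijective F ∧ (∀ b ∈ c.coinv, ∀ a, F (b * a) = b * F a) ∧ F 1 = 1 ∧
    ∀ a, c.ρ (F a) = LinearMap.rTensor H F (c.ρ a)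

variable {DA : DC k A} {DH : DGHopf k (H := H)}

/-- Convolution product with respect to the graded coproduct. -/
def convG (DH : DGHopf k (H := H)) {P : Type} [Ring P] [Algebra k P]
    (f g : DH.Ω →ₗ[k] P) : DH.Ω →ₗ[k] P :=
  LinearMap.mul' k P ∘ₗ TensorProduct.map f g ∘ₗ DH.Δg

/-- Convolution unit with respect to the graded counit. -/
def convGUnit (DH : DGHopf k (H := H)) {P : Type} [Ring P] [Algebra k P] :
    DH.Ω →ₗ[k] P :=
  Algebra.linearMap k P ∘ₗ DH.εg

/-- A map `Ω•(H) → Ω•(A)` of degree zero. -/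
def IsDeg0 (DH : DGHopf k (H := H)) (DA : DC k A) (f : DH.Ω →ₗ[k] DA.Ω) : Prop :=
  ∀ n, ∀ x ∈ DH.gr n, f x ∈ DA.gr n

/-- The degree-zero component `f⁰ : H → A` of a degree-zero map. -/
def deg0Part (DH : DGHopf k (H := H)) (DA : DC k A) (f : DH.Ω →ₗ[k] DA.Ω) :
    H →ₗ[k] A :=
  DA.p0 ∘ₗ f ∘ₗ DH.ι.toLinearMap

section WithComplete
variable {c : ComodAlg k H A} (E : Complete k c DA DH)

/-- A graded gauge transformation. -/
def IsGradedGauge (f : DH.Ω →ₗ[k] DA.Ω) : Prop :=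
  IsDeg0 DH DA f ∧
  (∃ g : DH.Ω →ₗ[k] DA.Ω, IsDeg0 DH DA g ∧
      convG DH f g = convGUnit DH ∧ convG DH g f = convGUnit DH) ∧
  f 1 = 1 ∧
  ∀ ω, E.Δc (f ω) = LinearMap.rTensor DH.Ω f (DH.AdG ω)

/-- A graded vertical automorphism. -/
def IsGradedVertAut (F : DA.Ω →ₗ[k] DA.Ω) : Prop :=
  (∀ n, ∀ x ∈ DA.gr n, F x ∈ DA.gr n) ∧ Function.Bijective F ∧
  (∀ β ∈ E.basic, ∀ x, F (β * x) = β * F x) ∧ F 1 = 1 ∧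
  ∀ x, E.Δc (F x) = LinearMap.rTensor DH.Ω F (E.Δc x)

/-- The right hand side `h ↦ s(ϖ(π_ε(h₂))) ⊗ S(h₁)h₃` of the colinearity
condition for connection 1-forms. -/
def connRHSg (s : DH.Ω →ₗ[k] DA.Ω) : H →ₗ[k] DA.Ω ⊗[k] H :=
  TensorProduct.map (s ∘ₗ DH.varpi)
      (LinearMap.mul' k H ∘ₗ LinearMap.rTensor H (HopfAlgebra.antipode (R := k))) ∘ₗ
    (TensorProduct.assoc k H H H).toLinearMap ∘ₗ
    LinearMap.rTensor H (TensorProduct.comm k H H).toLinearMap ∘ₗ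
    LinearMap.rTensor H (Coalgebra.comul (R := k)) ∘ₗ
    Coalgebra.comul (R := k)

/-- A connection 1-form on a quantum principal bundle with complete calculus. -/
def IsConnForm (s : DH.Ω →ₗ[k] DA.Ω) : Prop :=
  (∀ θ ∈ DH.lam1, s θ ∈ DA.gr 1) ∧
  (∀ h : H, E.ρΩ (s (DH.varpi h)) = connRHSg s h) ∧
  (∀ θ ∈ DH.lam1, E.piv (s θ) = (1 : A) ⊗ₜ[k] θ)

/-- The curvature `R_s(h) = d s(ϖ(h)) + s(ϖ(π_ε(h₁))) ∧ s(ϖ(π_ε(h₂)))`. -/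
def curvature (s : DH.Ω →ₗ[k] DA.Ω) : H →ₗ[k] DA.Ω :=
  DA.d ∘ₗ s ∘ₗ DH.varpi +
    LinearMap.mul' k DA.Ω ∘ₗ
      TensorProduct.map (s ∘ₗ DH.varpi) (s ∘ₗ DH.varpi) ∘ₗ Coalgebra.comul (R := k)

/-- The `Ω•(B)`-balancing relations in `Ω•(A) ⊗ Ω•(A)`. -/
def basicBalancer : Submodule k (DA.Ω ⊗[k] DA.Ω) :=
  balQ k (E.basic : Set DA.Ω)

/-- The graded Galois map `χ• : ω ⊗ η ↦ ω ∧ η₍₀₎ ⊗ η₍₁₎` before descending to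
`Ω•(A) ⊗_{Ω•(B)} Ω•(A)`. -/
def chi0g : DA.Ω ⊗[k] DA.Ω →ₗ[k] DA.Ω ⊗[k] DH.Ω :=
  gmulT DA.toGDA DH.toGDA ∘ₗ
    TensorProduct.map ((TensorProduct.mk k DA.Ω DH.Ω).flip 1) E.Δc

end WithComplete
end Gauge

/-! ### First-order machinery -/

section FirstOrder
variable {k}
variable {H A : Type} [Ring H] [HopfAlgebra k H] [Ring A] [Algebra k A]
variable {VA VH : Type} [AddCommGroup VA] [Module k VA] [AddCommGroup VH] [Module k VH]
variable {c : ComodAlg k H A}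

/-- The left coinvariant elements `Λ¹` of a left covariant FODC on `H`. -/
def Lam1 (L : LCovFODC k (H := H) VH) : Submodule k VH :=
  LinearMap.ker (L.lam - TensorProduct.mk k H VH 1)

/-- The Cartan–Maurer form `ϖ(h) = S(h₁) ⋅ d(h₂)` of a left covariant FODC. -/
def varpi1 (L : LCovFODC k (H := H) VH) : H →ₗ[k] VH :=
  TensorProduct.lift
    ((L.lact ∘ₗ HopfAlgebra.antipode (R := k)).compl₂ L.d) ∘ₗ
    Coalgebra.comul (R := k)

/-- The map `a' ↦ a'₀ ⊗ S(a'₁) ⋅ d(a'₂)`. -/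
def nuMap (c : ComodAlg k H A) (L : LCovFODC k (H := H) VH) : A →ₗ[k] A ⊗[k] VH :=
  LinearMap.lTensor A
      (TensorProduct.lift ((L.lact ∘ₗ HopfAlgebra.antipode (R := k)).compl₂ L.d)) ∘ₗ
    (TensorProduct.assoc k A H H).toLinearMap ∘ₗ
    LinearMap.rTensor H c.ρ ∘ₗ c.ρ

/-- A first order complete calculus: the vertical projection
`π_v(a ⋅ d a') = a a'₀ ⊗ S(a'₁) d a'₂` is well defined. -/
structure FOComplete (c : ComodAlg k H A) (FA : RCovFODC k c VA)
    (LH : LCovFODC k (H := H) VH) where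
  pv : VA →ₗ[k] A ⊗[k] VH
  pv_eq : ∀ a a' : A, pv (FA.lact a (FA.d a'))
    = LinearMap.rTensor VH (LinearMap.mulLeft k a) (nuMap c LH a')

/-- Colinearity right hand side for first-order connection forms. -/
def connRHS1 (LH : LCovFODC k (H := H) VH) (_FA : RCovFODC k c VA)
    (s : VH →ₗ[k] VA) : H →ₗ[k] VA ⊗[k] H :=
  TensorProduct.map (s ∘ₗ varpi1 LH)
      (LinearMap.mul' k H ∘ₗ LinearMap.rTensor H (HopfAlgebra.antipode (R := k))) ∘ₗ
    (TensorProduct.assoc k H H H).toLinearMap ∘ₗ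
    LinearMap.rTensor H (TensorProduct.comm k H H).toLinearMap ∘ₗ
    LinearMap.rTensor H (Coalgebra.comul (R := k)) ∘ₗ
    Coalgebra.comul (R := k)

/-- A connection 1-form for a first order complete calculus. -/
def IsConnForm1 {c : ComodAlg k H A} (FA : RCovFODC k c VA)
    (LH : LCovFODC k (H := H) VH) (E : FOComplete c FA LH)
    (s : VH →ₗ[k] VA) : Prop :=
  (∀ h : H, FA.ρV (s (varpi1 LH h)) = connRHS1 LH FA s h) ∧
  (∀ θ ∈ Lam1 LH, E.pv (s θ) = (1 : A) ⊗ₜ[k] θ)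

end FirstOrder

/-! ### The regular comodule algebra and bicovariant prolongations -/

section Reg
variable {k}
variable (H : Type) [Ring H] [HopfAlgebra k H]

variable (k) in
/-- `H` as a right comodule algebra over itself via the comultiplication. -/
def regCA : ComodAlg k H H where
  ρ := Coalgebra.comul
  ρ_one := Bialgebra.comul_one
  ρ_mul := fun a b => Bialgebra.comul_mul a b
  counit_ρ := by
    intro a
    have h := LinearMap.congr_fun
      (Coalgebra.lTensor_counit_comp_comul (R := k) (A := H)) a
    simp only [LinearMap.comp_apply] at h
    rw [h]
    simp
  coassoc_ρ := by
    intro a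
    have h := LinearMap.congr_fun (Coalgebra.coassoc (R := k) (A := H)) a
    simp only [LinearMap.comp_apply, LinearEquiv.coe_coe] at h
    exact h

variable {H} in
/-- `D` is the maximal prolongation of some bicovariant FODC on `H`. -/
def DGHopf.IsMaxProlOfBicov (D : DGHopf k (H := H)) : Prop :=
  ∃ (V : Type) (_ : AddCommGroup V) (_ : Module k V) (L : LCovFODC k (H := H) V),
    Nonempty (BicovStruct k L) ∧ IsMaxProlongation D.toDC L.toFODC

end Reg

section Aux14
variable {k}

section P0
variable {A : Type} [Ring A] [Algebra k A] (D : DC k A)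

lemma DC.p0_ι (a : A) : D.p0 (D.ι a) = a := by
  have hmem : D.ι a ∈ D.gr 0 := by
    rw [D.gr_zero]; exact ⟨a, rfl⟩
  simp only [DC.p0, LinearMap.comp_apply, LinearEquiv.coe_coe,
    DirectSum.decomposeLinearEquiv_apply]
  have hc : (DirectSum.component k ℕ (fun n => ↥(D.gr n)) 0)
      (DirectSum.decompose D.gr (D.ι a)) = DirectSum.decompose D.gr (D.ι a) 0 := rfl
  rw [hc, LinearEquiv.symm_apply_eq]
  apply Subtype.ext
  show _ = D.ι.toLinearMap a
  show (DirectSum.decompose D.gr (D.ι a) 0 : D.Ω) = D.ι a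
  exact DirectSum.decompose_of_mem_same _ hmem

lemma DC.ι_p0 {x : D.Ω} (hx : x ∈ D.gr 0) : D.ι (D.p0 x) = x := by
  obtain ⟨a, rfl⟩ : ∃ a, D.ι a = x := by
    have := D.gr_zero ▸ hx; exact this
  rw [D.p0_ι]

lemma DC.p0_of_mem_succ {n : ℕ} {x : D.Ω} (hx : x ∈ D.gr (n + 1)) : D.p0 x = 0 := by
  simp only [DC.p0, LinearMap.comp_apply, LinearEquiv.coe_coe,
    DirectSum.decomposeLinearEquiv_apply]
  have h0 : (DirectSum.component k ℕ (fun n => ↥(D.gr n)) 0)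
      (DirectSum.decompose D.gr x) = 0 := by
    rw [← Submodule.coe_eq_zero]
    have : (DirectSum.component k ℕ (fun n => ↥(D.gr n)) 0)
        (DirectSum.decompose D.gr x) = DirectSum.decompose D.gr x 0 := rfl
    rw [this]
    exact DirectSum.decompose_of_mem_ne D.gr hx (Nat.succ_ne_zero n)
  rw [h0]
  simp

end P0

section ConvAlg
variable {H A : Type} [Ring H] [HopfAlgebra k H] [Ring A] [Algebra k A]
variable {DA : DC k A} {DH : DGHopf k (H := H)}

/-- Two linear maps agreeing on each graded piece are equal. -/
lemma ext_graded {P : Type} [AddCommGroup P] [Module k P]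
    (L M : DH.Ω →ₗ[k] P) (h : ∀ n, ∀ x ∈ DH.gr n, L x = M x) : L = M := by
  have htop : (⨆ n, DH.gr n) = ⊤ :=
    (DirectSum.Decomposition.isInternal DH.gr).submodule_iSup_eq_top
  ext x
  have hx : x ∈ ⨆ n, DH.gr n := htop ▸ Submodule.mem_top
  refine Submodule.iSup_induction (motive := fun y => L y = M y) _ hx h (by simp) ?_
  intro y z hy hz
  rw [map_add, map_add, hy, hz]

/-- Workhorse: push a property through `Δg` on a graded piece. -/
lemma pair_tool {n : ℕ} {x : DH.Ω} (hx : x ∈ DH.gr n)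
    {P : Type} [AddCommGroup P] [Module k P]
    (L : DH.Ω ⊗[k] DH.Ω →ₗ[k] P) (Q : Submodule k P)
    (hL : ∀ p q : ℕ, p + q = n → ∀ y ∈ DH.gr p, ∀ z ∈ DH.gr q,
      L (y ⊗ₜ[k] z) ∈ Q) : L (DH.Δg x) ∈ Q := by
  have h := DH.Δg_grade n x hx
  have hle : (⨆ pp : {p : ℕ × ℕ // p.1 + p.2 = n},
      LinearMap.range (TensorProduct.map (DH.gr pp.1.1).subtype (DH.gr pp.1.2).subtype))
      ≤ Q.comap L := by
    apply iSup_le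
    rintro ⟨⟨p, q⟩, hpq⟩
    rw [TensorProduct.range_map_eq_span_tmul, Submodule.span_le]
    rintro _ ⟨⟨y, hy⟩, ⟨z, hz⟩, rfl⟩
    exact hL p q hpq y hy z hz
  exact hle h

lemma convG_apply (f g : DH.Ω →ₗ[k] DA.Ω) (x : DH.Ω) :
    convG DH f g x = (LinearMap.mul' k DA.Ω ∘ₗ TensorProduct.map f g) (DH.Δg x) := rfl

lemma convG_deg0 {f g : DH.Ω →ₗ[k] DA.Ω} (hf : IsDeg0 DH DA f)
    (hg : IsDeg0 DH DA g) : IsDeg0 DH DA (convG DH f g) := by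
  intro n x hx
  rw [convG_apply]
  refine pair_tool hx _ (DA.gr n) ?_
  intro p q hpq y hy z hz
  simp only [LinearMap.comp_apply, TensorProduct.map_tmul, LinearMap.mul'_apply]
  rw [← hpq]
  exact SetLike.mul_mem_graded (hf p y hy) (hg q z hz)

lemma convGUnit_deg0 : IsDeg0 DH DA (convGUnit DH) := by
  intro n x hx
  cases n with
  | zero =>
    show Algebra.linearMap k DA.Ω (DH.εg x) ∈ DA.gr 0
    simp only [Algebra.linearMap_apply, Algebra.algebraMap_eq_smul_one]
    exact Submodule.smul_mem _ _ (SetLike.one_mem_graded DA.gr)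
  | succ n =>
    show Algebra.linearMap k DA.Ω (DH.εg x) ∈ DA.gr (n + 1)
    rw [DH.εg_pos n x hx]
    simp

lemma convG_assoc {P : Type} [Ring P] [Algebra k P] (a b c : DH.Ω →ₗ[k] P) :
    convG DH (convG DH a b) c = convG DH a (convG DH b c) := by
  have key : (LinearMap.mul' k P ∘ₗ TensorProduct.map a
        (LinearMap.mul' k P ∘ₗ TensorProduct.map b c)) ∘ₗ
        (TensorProduct.assoc k DH.Ω DH.Ω DH.Ω).toLinearMap
      = LinearMap.mul' k P ∘ₗ
        TensorProduct.map (LinearMap.mul' k P ∘ₗ TensorProduct.map a b) c := by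
    apply TensorProduct.ext_threefold
    intro x y z
    simp [mul_assoc]
  have e1 : TensorProduct.map (convG DH a b) c
      = (TensorProduct.map (LinearMap.mul' k P ∘ₗ TensorProduct.map a b) c) ∘ₗ
        LinearMap.rTensor DH.Ω DH.Δg := by
    apply TensorProduct.ext'
    intro y z
    simp [convG]
  have e2 : TensorProduct.map a (convG DH b c)
      = (TensorProduct.map a (LinearMap.mul' k P ∘ₗ TensorProduct.map b c)) ∘ₗ
        LinearMap.lTensor DH.Ω DH.Δg := by
    apply TensorProduct.ext'
    intro y z
    simp [convG]
  ext x
  show LinearMap.mul' k P (TensorProduct.map (convG DH a b) c (DH.Δg x))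
    = LinearMap.mul' k P (TensorProduct.map a (convG DH b c) (DH.Δg x))
  rw [e1, e2]
  simp only [LinearMap.comp_apply]
  rw [← DH.Δg_coassoc x]
  exact (LinearMap.congr_fun key (LinearMap.rTensor DH.Ω DH.Δg (DH.Δg x))).symm

lemma convG_unit_left {P : Type} [Ring P] [Algebra k P] (f : DH.Ω →ₗ[k] P) :
    convG DH (convGUnit DH) f = f := by
  have e : LinearMap.mul' k P ∘ₗ
        TensorProduct.map (Algebra.linearMap k P ∘ₗ DH.εg) f
      = f ∘ₗ (TensorProduct.lid k DH.Ω).toLinearMap ∘ₗ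
          LinearMap.rTensor DH.Ω DH.εg := by
    apply TensorProduct.ext'
    intro y z
    simp only [LinearMap.comp_apply, TensorProduct.map_tmul, LinearMap.mul'_apply,
      Algebra.linearMap_apply, LinearEquiv.coe_coe, LinearMap.rTensor_tmul,
      TensorProduct.lid_tmul]
    rw [← Algebra.smul_def]; exact (map_smul f _ _).symm
  ext x
  show (LinearMap.mul' k P ∘ₗ
      TensorProduct.map (Algebra.linearMap k P ∘ₗ DH.εg) f) (DH.Δg x) = f x
  rw [e]
  simp only [LinearMap.comp_apply, LinearEquiv.coe_coe]
  rw [DH.Δg_counit_l x]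

lemma convG_unit_right {P : Type} [Ring P] [Algebra k P] (f : DH.Ω →ₗ[k] P) :
    convG DH f (convGUnit DH) = f := by
  have e : LinearMap.mul' k P ∘ₗ
        TensorProduct.map f (Algebra.linearMap k P ∘ₗ DH.εg)
      = f ∘ₗ (TensorProduct.rid k DH.Ω).toLinearMap ∘ₗ
          LinearMap.lTensor DH.Ω DH.εg := by
    apply TensorProduct.ext'
    intro y z
    simp only [LinearMap.comp_apply, TensorProduct.map_tmul, LinearMap.mul'_apply,
      Algebra.linearMap_apply, LinearEquiv.coe_coe, LinearMap.lTensor_tmul,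
      TensorProduct.rid_tmul]
    calc f y * algebraMap k P (DH.εg z) = DH.εg z • f y := by
          rw [← Algebra.commutes, ← Algebra.smul_def]
      _ = f (DH.εg z • y) := (map_smul f _ _).symm
  ext x
  show (LinearMap.mul' k P ∘ₗ
      TensorProduct.map f (Algebra.linearMap k P ∘ₗ DH.εg)) (DH.Δg x) = f x
  rw [e]
  simp only [LinearMap.comp_apply, LinearEquiv.coe_coe]
  rw [DH.Δg_counit_r x]


/-- Convolution with fixed left factor, as a linear map. -/
def convGR {P : Type} [Ring P] [Algebra k P] (f : DH.Ω →ₗ[k] P) :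
    (DH.Ω →ₗ[k] P) →ₗ[k] (DH.Ω →ₗ[k] P) where
  toFun g := convG DH f g
  map_add' g₁ g₂ := by
    ext x; simp [convG, TensorProduct.map_add_right]
  map_smul' c g := by
    ext x; simp [convG, TensorProduct.map_smul_right]

/-- Convolution with fixed right factor, as a linear map. -/
def convGL {P : Type} [Ring P] [Algebra k P] (g : DH.Ω →ₗ[k] P) :
    (DH.Ω →ₗ[k] P) →ₗ[k] (DH.Ω →ₗ[k] P) where
  toFun f := convG DH f g
  map_add' f₁ f₂ := by
    ext x; simp [convG, TensorProduct.map_add_left]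
  map_smul' c f := by
    ext x; simp [convG, TensorProduct.map_smul_left]

/-- Convolution powers of `N`. -/
def Npow (N : DH.Ω →ₗ[k] DA.Ω) : ℕ → (DH.Ω →ₗ[k] DA.Ω)
  | 0 => convGUnit DH
  | m + 1 => convG DH N (Npow N m)

lemma Npow_deg0 {N : DH.Ω →ₗ[k] DA.Ω} (hN : IsDeg0 DH DA N) :
    ∀ m, IsDeg0 DH DA (Npow N m)
  | 0 => convGUnit_deg0
  | m + 1 => convG_deg0 hN (Npow_deg0 hN m)

lemma Npow_succ_right (N : DH.Ω →ₗ[k] DA.Ω) (m : ℕ) :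
    Npow N (m + 1) = convG DH (Npow N m) N := by
  induction m with
  | zero => show convG DH N (convGUnit DH) = convG DH (convGUnit DH) N
            rw [convG_unit_right, convG_unit_left]
  | succ m ih =>
      calc convG DH N (Npow N (m + 1)) = convG DH N (convG DH (Npow N m) N) := by
              rw [← ih]
        _ = convG DH (convG DH N (Npow N m)) N := (convG_assoc _ _ _).symm
        _ = convG DH (Npow N (m + 1)) N := rfl

lemma Npow_vanish {N : DH.Ω →ₗ[k] DA.Ω} (hN0 : ∀ x ∈ DH.gr 0, N x = 0) :
    ∀ m n, n < m → ∀ x ∈ DH.gr n, Npow N m x = 0 := by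
  intro m
  induction m with
  | zero => omega
  | succ m ih =>
    intro n hn x hx
    show (LinearMap.mul' k DA.Ω ∘ₗ TensorProduct.map N (Npow N m)) (DH.Δg x) = 0
    rw [← Submodule.mem_bot (R := k)]
    refine pair_tool hx _ ⊥ ?_
    intro p q hpq y hy z hz
    simp only [LinearMap.comp_apply, TensorProduct.map_tmul, LinearMap.mul'_apply,
      Submodule.mem_bot]
    rcases Nat.eq_zero_or_pos p with hp | hp
    · subst hp
      rw [hN0 y hy, zero_mul]
    · rw [ih q (by omega) z hz, mul_zero]

/-- The locally finite geometric series `∑ₘ N^{∗m}`. -/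
def geom (N : DH.Ω →ₗ[k] DA.Ω) : DH.Ω →ₗ[k] DA.Ω :=
  (DirectSum.toModule k ℕ DA.Ω fun n =>
      (∑ m ∈ Finset.range (n + 1), Npow N m) ∘ₗ (DH.gr n).subtype) ∘ₗ
    (DirectSum.decomposeLinearEquiv DH.gr).toLinearMap

lemma geom_apply (N : DH.Ω →ₗ[k] DA.Ω) {n : ℕ} {x : DH.Ω} (hx : x ∈ DH.gr n) :
    geom N x = ∑ m ∈ Finset.range (n + 1), Npow N m x := by
  simp only [geom, LinearMap.comp_apply, LinearEquiv.coe_coe,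
    DirectSum.decomposeLinearEquiv_apply]
  rw [DirectSum.decompose_of_mem _ hx, ← DirectSum.lof_eq_of k,
    DirectSum.toModule_lof]
  simp

lemma geom_deg0 {N : DH.Ω →ₗ[k] DA.Ω} (hN : IsDeg0 DH DA N) :
    IsDeg0 DH DA (geom N) := by
  intro n x hx
  rw [geom_apply N hx]
  exact Submodule.sum_mem _ fun m _ => Npow_deg0 hN m n x hx

lemma geom_trunc {N : DH.Ω →ₗ[k] DA.Ω} (hN0 : ∀ x ∈ DH.gr 0, N x = 0)
    {q n : ℕ} (hq : q ≤ n) {z : DH.Ω} (hz : z ∈ DH.gr q) :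
    geom N z = ∑ m ∈ Finset.range (n + 1), Npow N m z := by
  rw [geom_apply N hz]
  refine Finset.sum_subset (Finset.range_subset_range.mpr (by omega)) ?_
  intro m hm hnm
  simp only [Finset.mem_range] at hm hnm
  exact Npow_vanish hN0 m q (by omega) z hz

lemma convG_geom_right {N : DH.Ω →ₗ[k] DA.Ω} (hN0 : ∀ x ∈ DH.gr 0, N x = 0)
    {n : ℕ} {x : DH.Ω} (hx : x ∈ DH.gr n) :
    convG DH N (geom N) x = ∑ m ∈ Finset.range (n + 1), Npow N (m + 1) x := by
  have htr : convG DH N (geom N) x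
      = convG DH N (∑ m ∈ Finset.range (n + 1), Npow N m) x := by
    have h0 : (LinearMap.mul' k DA.Ω ∘ₗ TensorProduct.map N (geom N)
        - LinearMap.mul' k DA.Ω ∘ₗ
            TensorProduct.map N (∑ m ∈ Finset.range (n + 1), Npow N m)) (DH.Δg x)
        = 0 := by
      rw [← Submodule.mem_bot (R := k)]
      refine pair_tool hx _ ⊥ ?_
      intro p q hpq y hy z hz
      simp only [LinearMap.sub_apply, LinearMap.comp_apply, TensorProduct.map_tmul,
        LinearMap.mul'_apply, Submodule.mem_bot]
      rcases Nat.eq_zero_or_pos p with hp | hp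
      · subst hp
        rw [hN0 y hy, zero_mul, zero_mul, sub_self]
      · rw [geom_trunc hN0 (show q ≤ n by omega) hz]
        simp only [LinearMap.coe_sum, Finset.sum_apply]
        rw [sub_self]
    have h1 := sub_eq_zero.mp (by simpa using h0)
    exact h1
  rw [htr]
  have h2 : convG DH N (∑ m ∈ Finset.range (n + 1), Npow N m)
      = ∑ m ∈ Finset.range (n + 1), Npow N (m + 1) := by
    show convGR N (∑ m ∈ Finset.range (n + 1), Npow N m) = _
    rw [map_sum]
    rfl
  rw [h2]
  simp

lemma convG_geom_left {N : DH.Ω →ₗ[k] DA.Ω} (hN0 : ∀ x ∈ DH.gr 0, N x = 0)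
    {n : ℕ} {x : DH.Ω} (hx : x ∈ DH.gr n) :
    convG DH (geom N) N x = ∑ m ∈ Finset.range (n + 1), Npow N (m + 1) x := by
  have htr : convG DH (geom N) N x
      = convG DH (∑ m ∈ Finset.range (n + 1), Npow N m) N x := by
    have h0 : (LinearMap.mul' k DA.Ω ∘ₗ TensorProduct.map (geom N) N
        - LinearMap.mul' k DA.Ω ∘ₗ
            TensorProduct.map (∑ m ∈ Finset.range (n + 1), Npow N m) N) (DH.Δg x)
        = 0 := by
      rw [← Submodule.mem_bot (R := k)]
      refine pair_tool hx _ ⊥ ?_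
      intro p q hpq y hy z hz
      simp only [LinearMap.sub_apply, LinearMap.comp_apply, TensorProduct.map_tmul,
        LinearMap.mul'_apply, Submodule.mem_bot]
      rcases Nat.eq_zero_or_pos q with hq | hq
      · subst hq
        rw [hN0 z hz, mul_zero, mul_zero, sub_self]
      · rw [geom_trunc hN0 (show p ≤ n by omega) hy]
        simp only [LinearMap.coe_sum, Finset.sum_apply]
        rw [sub_self]
    have h1 := sub_eq_zero.mp (by simpa using h0)
    exact h1
  rw [htr]
  have h2 : convG DH (∑ m ∈ Finset.range (n + 1), Npow N m) N
      = ∑ m ∈ Finset.range (n + 1), Npow N (m + 1) := by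
    show convGL N (∑ m ∈ Finset.range (n + 1), Npow N m) = _
    rw [map_sum]
    refine Finset.sum_congr rfl fun m _ => ?_
    show convG DH (Npow N m) N = Npow N (m + 1)
    rw [Npow_succ_right]
  rw [h2]
  simp

lemma geom_inv_right {N : DH.Ω →ₗ[k] DA.Ω}
    (hN0 : ∀ x ∈ DH.gr 0, N x = 0) :
    convG DH (convGUnit DH - N) (geom N) = convGUnit DH := by
  refine ext_graded _ _ fun n x hx => ?_
  have hsub : convG DH (convGUnit DH - N) (geom N)
      = convG DH (convGUnit DH) (geom N) - convG DH N (geom N) := by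
    show convGL (geom N) (convGUnit DH - N) = _
    rw [map_sub]
    rfl
  rw [hsub, LinearMap.sub_apply, convG_unit_left, geom_apply N hx,
    convG_geom_right hN0 hx]
  rw [← Finset.sum_sub_distrib, Finset.sum_range_sub' (fun m => Npow N m x)]
  rw [Npow_vanish hN0 (n + 1) n (by omega) x hx, sub_zero]
  rfl

lemma geom_inv_left {N : DH.Ω →ₗ[k] DA.Ω}
    (hN0 : ∀ x ∈ DH.gr 0, N x = 0) :
    convG DH (geom N) (convGUnit DH - N) = convGUnit DH := by
  refine ext_graded _ _ fun n x hx => ?_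
  have hsub : convG DH (geom N) (convGUnit DH - N)
      = convG DH (geom N) (convGUnit DH) - convG DH (geom N) N := by
    show convGR (geom N) (convGUnit DH - N) = _
    rw [map_sub]
    rfl
  rw [hsub, LinearMap.sub_apply, convG_unit_right, geom_apply N hx,
    convG_geom_left hN0 hx]
  rw [← Finset.sum_sub_distrib, Finset.sum_range_sub' (fun m => Npow N m x)]
  rw [Npow_vanish hN0 (n + 1) n (by omega) x hx, sub_zero]
  rfl


/-! ### Degree-zero interface -/

lemma mem_gr_zero_ι (h : H) : DH.ι h ∈ DH.gr 0 := by
  rw [DH.gr_zero]; exact ⟨h, rfl⟩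

lemma f_apply_ι {f : DH.Ω →ₗ[k] DA.Ω} (hf : IsDeg0 DH DA f) (h : H) :
    f (DH.ι h) = DA.ι (deg0Part DH DA f h) :=
  (DA.ι_p0 (hf 0 _ (mem_gr_zero_ι h))).symm

lemma convGUnit_ι (h : H) :
    convGUnit DH (DH.ι h) = DA.ι (convUnit k h) := by
  show Algebra.linearMap k DA.Ω (DH.εg (DH.ι h))
    = DA.ι (Algebra.linearMap k A (Coalgebra.counit h))
  rw [DH.εg_zero]
  simp only [Algebra.linearMap_apply]
  rw [AlgHom.commutes]

lemma convG_ι {f g : DH.Ω →ₗ[k] DA.Ω} (hf : IsDeg0 DH DA f)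
    (hg : IsDeg0 DH DA g) (h : H) :
    convG DH f g (DH.ι h)
      = DA.ι (conv k (deg0Part DH DA f) (deg0Part DH DA g) h) := by
  have e : LinearMap.mul' k DA.Ω ∘ₗ TensorProduct.map f g ∘ₗ
        TensorProduct.map DH.ι.toLinearMap DH.ι.toLinearMap
      = DA.ι.toLinearMap ∘ₗ LinearMap.mul' k A ∘ₗ
        TensorProduct.map (deg0Part DH DA f) (deg0Part DH DA g) := by
    apply TensorProduct.ext'
    intro a b
    simp only [LinearMap.comp_apply, TensorProduct.map_tmul, LinearMap.mul'_apply,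
      AlgHom.toLinearMap_apply]
    rw [f_apply_ι hf, f_apply_ι hg, ← map_mul]
  have e2 := LinearMap.congr_fun e (Coalgebra.comul (R := k) h)
  simp only [LinearMap.comp_apply, AlgHom.toLinearMap_apply] at e2
  show LinearMap.mul' k DA.Ω (TensorProduct.map f g (DH.Δg (DH.ι h))) = _
  rw [DH.Δg_zero]
  exact e2

lemma part1_forward {f g : DH.Ω →ₗ[k] DA.Ω} (hf : IsDeg0 DH DA f)
    (hg : IsDeg0 DH DA g) (h1 : convG DH f g = convGUnit DH)
    (h2 : convG DH g f = convGUnit DH) :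
    IsConvInvertible k (deg0Part DH DA f) := by
  refine ⟨deg0Part DH DA g, ?_, ?_⟩
  · ext h
    apply DA.ι_inj
    rw [← convG_ι hf hg h, h1, convGUnit_ι]
  · ext h
    apply DA.ι_inj
    rw [← convG_ι hg hf h, h2, convGUnit_ι]

lemma part1_backward {f : DH.Ω →ₗ[k] DA.Ω} (hf : IsDeg0 DH DA f)
    (hinv : IsConvInvertible k (deg0Part DH DA f)) :
    ∃ g : DH.Ω →ₗ[k] DA.Ω, IsDeg0 DH DA g ∧
      convG DH f g = convGUnit DH ∧ convG DH g f = convGUnit DH := by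
  obtain ⟨fb, hfb1, hfb2⟩ := hinv
  set g₀ : DH.Ω →ₗ[k] DA.Ω := DA.ι.toLinearMap ∘ₗ fb ∘ₗ DH.toDC.p0 with hg₀def
  have hg₀ : IsDeg0 DH DA g₀ := by
    intro n x hx
    cases n with
    | zero =>
      rw [DA.gr_zero]
      exact ⟨fb (DH.toDC.p0 x), rfl⟩
    | succ n =>
      have : DH.toDC.p0 x = 0 := DH.toDC.p0_of_mem_succ hx
      simp [hg₀def, this]
  have hdg₀ : deg0Part DH DA g₀ = fb := by
    ext h
    show DA.p0 (g₀ (DH.ι h)) = fb h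
    simp only [hg₀def, LinearMap.comp_apply, AlgHom.toLinearMap_apply]
    rw [show DH.toDC.p0 (DH.ι h) = h from DH.toDC.p0_ι h, DA.p0_ι]
  -- right inverse
  set N : DH.Ω →ₗ[k] DA.Ω := convGUnit DH - convG DH f g₀ with hNdef
  have hNdeg : IsDeg0 DH DA N := by
    intro n x hx
    exact Submodule.sub_mem _ (convGUnit_deg0 n x hx) (convG_deg0 hf hg₀ n x hx)
  have hN0 : ∀ x ∈ DH.gr 0, N x = 0 := by
    intro x hx
    obtain ⟨h, rfl⟩ : ∃ h, DH.ι h = x := by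
      have := DH.gr_zero ▸ hx; exact this
    show convGUnit DH (DH.ι h) - convG DH f g₀ (DH.ι h) = 0
    rw [convG_ι hf hg₀, hdg₀, hfb1, convGUnit_ι, sub_self]
  have hfg₀ : convG DH f g₀ = convGUnit DH - N := by rw [hNdef]; abel
  have hright : convG DH f (convG DH g₀ (geom N)) = convGUnit DH := by
    rw [← convG_assoc, hfg₀, geom_inv_right hN0]
  -- left inverse
  set N' : DH.Ω →ₗ[k] DA.Ω := convGUnit DH - convG DH g₀ f with hN'def
  have hN'0 : ∀ x ∈ DH.gr 0, N' x = 0 := by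
    intro x hx
    obtain ⟨h, rfl⟩ : ∃ h, DH.ι h = x := by
      have := DH.gr_zero ▸ hx; exact this
    show convGUnit DH (DH.ι h) - convG DH g₀ f (DH.ι h) = 0
    rw [convG_ι hg₀ hf, hdg₀, hfb2, convGUnit_ι, sub_self]
  have hg₀f : convG DH g₀ f = convGUnit DH - N' := by rw [hN'def]; abel
  have hleft : convG DH (convG DH (geom N') g₀) f = convGUnit DH := by
    rw [convG_assoc, hg₀f, geom_inv_left hN'0]
  -- the two coincide
  have hcoin : convG DH (geom N') g₀ = convG DH g₀ (geom N) := by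
    calc convG DH (geom N') g₀
        = convG DH (convG DH (geom N') g₀) (convGUnit DH) := (convG_unit_right _).symm
      _ = convG DH (convG DH (geom N') g₀) (convG DH f (convG DH g₀ (geom N))) := by
          rw [hright]
      _ = convG DH (convG DH (convG DH (geom N') g₀) f) (convG DH g₀ (geom N)) :=
          (convG_assoc (convG DH (geom N') g₀) f (convG DH g₀ (geom N))).symm
      _ = convG DH (convGUnit DH) (convG DH g₀ (geom N)) := by rw [hleft]
      _ = convG DH g₀ (geom N) := convG_unit_left _
  refine ⟨convG DH g₀ (geom N), convG_deg0 hg₀ (geom_deg0 hNdeg), hright, ?_⟩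
  rw [← hcoin, hleft]


/-! ### The graded adjoint coaction in degree zero -/

lemma koszulFlip_deg0 (D E : GDA k) {x : D.Ω} (hx : x ∈ D.gr 0) (y : E.Ω) :
    koszulFlip D E (x ⊗ₜ[k] y) = y ⊗ₜ[k] x := by
  simp only [koszulFlip, LinearMap.comp_apply, LinearEquiv.coe_coe,
    LinearMap.rTensor_tmul, DirectSum.decomposeLinearEquiv_apply]
  rw [DirectSum.decompose_of_mem _ hx, ← DirectSum.lof_eq_of k,
    TensorProduct.directSumLeft_tmul_lof, DirectSum.toModule_lof]
  simp only [LinearMap.comp_apply, LinearEquiv.coe_coe, TensorProduct.map_tmul,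
    Submodule.coe_subtype, pow_zero, Module.End.one_apply, TensorProduct.comm_tmul]

lemma AdG_ι (h : H) :
    DH.AdG (DH.ι h)
      = TensorProduct.map DH.ι.toLinearMap DH.ι.toLinearMap (AdMap h) := by
  have e1 : LinearMap.rTensor DH.Ω DH.Δg ∘ₗ
        TensorProduct.map DH.ι.toLinearMap DH.ι.toLinearMap
      = TensorProduct.map (TensorProduct.map DH.ι.toLinearMap DH.ι.toLinearMap)
          DH.ι.toLinearMap ∘ₗ
        LinearMap.rTensor H (Coalgebra.comul (R := k)) := by
    apply TensorProduct.ext'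
    intro a b
    simp only [LinearMap.comp_apply, TensorProduct.map_tmul, LinearMap.rTensor_tmul,
      AlgHom.toLinearMap_apply]
    rw [DH.Δg_zero]
  have e2 : (LinearMap.lTensor DH.Ω (LinearMap.mul' k DH.Ω ∘ₗ
          LinearMap.rTensor DH.Ω DH.Sg) ∘ₗ
        (TensorProduct.assoc k DH.Ω DH.Ω DH.Ω).toLinearMap ∘ₗ
        LinearMap.rTensor DH.Ω (koszulFlip DH.toGDA DH.toGDA)) ∘ₗ
        TensorProduct.map (TensorProduct.map DH.ι.toLinearMap DH.ι.toLinearMap)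
          DH.ι.toLinearMap
      = TensorProduct.map DH.ι.toLinearMap DH.ι.toLinearMap ∘ₗ
        (LinearMap.lTensor H (LinearMap.mul' k H) ∘ₗ
          (TensorProduct.assoc k H H H).toLinearMap ∘ₗ
          LinearMap.rTensor H ((TensorProduct.comm k H H).toLinearMap ∘ₗ
            LinearMap.rTensor H (HopfAlgebra.antipode (R := k)))) := by
    apply TensorProduct.ext_threefold
    intro a b c
    simp only [LinearMap.comp_apply, TensorProduct.map_tmul, LinearMap.rTensor_tmul,
      LinearEquiv.coe_coe, TensorProduct.comm_tmul, TensorProduct.assoc_tmul,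
      LinearMap.lTensor_tmul, LinearMap.mul'_apply, AlgHom.toLinearMap_apply]
    rw [koszulFlip_deg0 DH.toGDA DH.toGDA (mem_gr_zero_ι a) (DH.ι b)]
    simp only [TensorProduct.assoc_tmul, LinearMap.lTensor_tmul, LinearMap.comp_apply,
      LinearMap.rTensor_tmul, LinearMap.mul'_apply]
    rw [DH.Sg_zero, ← map_mul]
  show (LinearMap.lTensor DH.Ω (LinearMap.mul' k DH.Ω ∘ₗ LinearMap.rTensor DH.Ω DH.Sg))
      ((TensorProduct.assoc k DH.Ω DH.Ω DH.Ω).toLinearMap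
        ((LinearMap.rTensor DH.Ω (koszulFlip DH.toGDA DH.toGDA))
          ((LinearMap.rTensor DH.Ω DH.Δg) (DH.Δg (DH.ι h)))))
    = TensorProduct.map DH.ι.toLinearMap DH.ι.toLinearMap (AdMap h)
  rw [DH.Δg_zero]
  have e1' := LinearMap.congr_fun e1 (Coalgebra.comul (R := k) h)
  simp only [LinearMap.comp_apply] at e1'
  rw [e1']
  have e2' := LinearMap.congr_fun e2
    (LinearMap.rTensor H (Coalgebra.comul (R := k)) (Coalgebra.comul (R := k) h))
  simp only [LinearMap.comp_apply, LinearEquiv.coe_coe] at e2'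
  exact e2'.trans rfl


lemma map_ιι_injective : Function.Injective
    (TensorProduct.map DA.ι.toLinearMap DH.ι.toLinearMap :
      A ⊗[k] H →ₗ[k] DA.Ω ⊗[k] DH.Ω) := by
  have h1 : Function.Injective ⇑(DA.ι.toLinearMap) := DA.ι_inj
  have h2 : Function.Injective ⇑(DH.ι.toLinearMap) := DH.ι_inj
  rw [← LinearMap.lTensor_comp_rTensor, LinearMap.coe_comp]
  exact (Module.Flat.lTensor_preserves_injective_linearMap _ h2).comp
    (Module.Flat.rTensor_preserves_injective_linearMap _ h1)

lemma colin_deg0 {c : ComodAlg k H A} (E : Complete k c DA DH)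
    {f : DH.Ω →ₗ[k] DA.Ω} (hf : IsDeg0 DH DA f)
    (hcol : ∀ ω, E.Δc (f ω) = LinearMap.rTensor DH.Ω f (DH.AdG ω)) (h : H) :
    c.ρ (deg0Part DH DA f h)
      = LinearMap.rTensor H (deg0Part DH DA f) (AdMap h) := by
  apply map_ιι_injective (DA := DA) (DH := DH)
  have e3 : LinearMap.rTensor DH.Ω f ∘ₗ
        TensorProduct.map DH.ι.toLinearMap DH.ι.toLinearMap
      = TensorProduct.map DA.ι.toLinearMap DH.ι.toLinearMap ∘ₗ
        LinearMap.rTensor H (deg0Part DH DA f) := by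
    apply TensorProduct.ext'
    intro a b
    simp only [LinearMap.comp_apply, TensorProduct.map_tmul, LinearMap.rTensor_tmul,
      AlgHom.toLinearMap_apply]
    rw [f_apply_ι hf]
  have e3' := LinearMap.congr_fun e3 (AdMap h)
  simp only [LinearMap.comp_apply] at e3'
  calc TensorProduct.map DA.ι.toLinearMap DH.ι.toLinearMap
        (c.ρ (deg0Part DH DA f h))
      = E.Δc (DA.ι (deg0Part DH DA f h)) := (E.Δc_zero _).symm
    _ = E.Δc (f (DH.ι h)) := by rw [f_apply_ι hf]
    _ = LinearMap.rTensor DH.Ω f (DH.AdG (DH.ι h)) := hcol _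
    _ = LinearMap.rTensor DH.Ω f
          (TensorProduct.map DH.ι.toLinearMap DH.ι.toLinearMap (AdMap h)) := by
        rw [AdG_ι]
    _ = TensorProduct.map DA.ι.toLinearMap DH.ι.toLinearMap
          (LinearMap.rTensor H (deg0Part DH DA f) (AdMap h)) := e3'

lemma f_one_of_deg0 {f : DH.Ω →ₗ[k] DA.Ω} (hf : IsDeg0 DH DA f)
    (h1 : deg0Part DH DA f 1 = 1) : f 1 = 1 := by
  rw [show (1 : DH.Ω) = DH.ι 1 from (map_one DH.ι).symm, f_apply_ι hf, h1, map_one]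

lemma deg0Part_one {f : DH.Ω →ₗ[k] DA.Ω} (hone : f 1 = 1) :
    deg0Part DH DA f 1 = 1 := by
  show DA.p0 (f (DH.ι 1)) = 1
  rw [map_one DH.ι, hone, show (1 : DA.Ω) = DA.ι 1 from (map_one DA.ι).symm, DA.p0_ι]

end ConvAlg


end Aux14

/-! ## Statement 14: graded convolution invertibility is a degree-zero condition -/

/-- A degree-zero map `f• : Ω•(H) → Ω•(A)` is convolution invertible (w.r.t. the
graded coproduct and counit) iff its degree-zero part `f⁰ : H → A` is
convolution invertible.  In particular `f•` is a graded gauge transformation iff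
`f⁰` is a gauge transformation and `f•` is colinear for the graded adjoint
coaction. -/
theorem graded_convolution_invertible_iff_degree_zero
    {H A : Type} [Ring H] [HopfAlgebra k H] [Ring A] [Algebra k A]
    (P : QPB k H A) (DA : DC k A) (DH : DGHopf k (H := H))
    (hDH : DH.IsMaxProlOfBicov) (E : Complete k P.toComodAlg DA DH)
    (f : DH.Ω →ₗ[k] DA.Ω) (hf : IsDeg0 DH DA f) :
    ((∃ g : DH.Ω →ₗ[k] DA.Ω, IsDeg0 DH DA g ∧
        convG DH f g = convGUnit DH ∧ convG DH g f = convGUnit DH) ↔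
      IsConvInvertible k (deg0Part DH DA f)) ∧
    (IsGradedGauge E f ↔
      (IsGauge P.toComodAlg (deg0Part DH DA f) ∧
        ∀ ω, E.Δc (f ω) = LinearMap.rTensor DH.Ω f (DH.AdG ω))) := by
  constructor
  · constructor
    · rintro ⟨g, hg, h1, h2⟩
      exact part1_forward hf hg h1 h2
    · exact part1_backward hf
  · constructor
    · rintro ⟨hdeg, hex, hone, hcol⟩
      refine ⟨⟨?_, deg0Part_one hone, colin_deg0 E hf hcol⟩, hcol⟩
      obtain ⟨g, hg, h1, h2⟩ := hex
      exact part1_forward hf hg h1 h2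
    · rintro ⟨⟨hinv, hone0, hcol0⟩, hcol⟩
      exact ⟨hf, part1_backward hf hinv, f_one_of_deg0 hf hone0, hcol⟩



end QPBPaper
end
end

section
/- Let Ω•(A) be a complete calculus on a quantum principal bundle B := A^{coH} ⊆ A, let s: Λ¹ → Ω¹(A) be a connection 1-form, and let F•: Ω•(A) → Ω•(A) be a graded vertical automorphism. Then F•▷s := F•∘s: Λ¹ → Ω¹(A) is again a connection 1-form, its curvature is R_{F•▷s}(h) = d F•(s(ϖ(h))) + F•(s(ϖ(π_ε(h₁)))) ∧ F•(s(ϖ(π_ε(h₂)))) for h ∈ H⁺; if F• is in addition a morphism of differential graded algebras, then F•∘R_s = R_{F•▷s}. Moreover, (F•, s) ↦ F•▷s defines a group action of the graded vertical automorphisms on the set of connection 1-forms. -/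
open TensorProduct

noncomputable section

namespace QPBPaper

variable (k : Type) [Field k]

variable {k}

variable (k)

variable {k}

variable (k)

section Aux
variable {k : Type} [Field k]

namespace DCAux
variable {A : Type} [Ring A] [Algebra k A]

lemma p0_spec (D : DC k A) (x : D.Ω) :
    D.ι (D.p0 x) = ((DirectSum.decompose D.gr x) 0 : D.Ω) := by
  unfold DC.p0
  simp only [LinearMap.comp_apply, LinearEquiv.coe_coe, DirectSum.decomposeLinearEquiv_apply]
  rw [← DirectSum.apply_eq_component]
  set y : D.gr 0 := (DirectSum.decompose D.gr x) 0 with hy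
  have h2 : ((LinearEquiv.ofEq _ _ D.gr_zero) y : D.Ω) = (y : D.Ω) := rfl
  set z := (LinearEquiv.ofEq _ _ D.gr_zero) y
  have h := LinearEquiv.ofInjective_apply D.ι.toLinearMap
    (h := D.ι_inj) ((LinearEquiv.ofInjective D.ι.toLinearMap D.ι_inj).symm z)
  rw [LinearEquiv.apply_symm_apply] at h
  show D.ι.toLinearMap _ = _
  rw [← h, h2]

lemma p0_ι (D : DC k A) (a : A) : D.p0 (D.ι a) = a := by
  apply D.ι_inj
  rw [p0_spec]
  exact DirectSum.decompose_of_mem_same D.gr (D.gr_zero ▸ LinearMap.mem_range_self D.ι.toLinearMap a)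

lemma p0_succ (D : DC k A) {n : ℕ} {x : D.Ω} (hx : x ∈ D.gr (n + 1)) : D.p0 x = 0 := by
  apply D.ι_inj
  rw [p0_spec, map_zero]
  exact DirectSum.decompose_of_mem_ne D.gr hx (Nat.succ_ne_zero n)

end DCAux
end Aux

/-! ## Statement 16: gauge transformations act on connections -/

/-- Graded vertical automorphisms act on connection 1-forms by
`F• ▷ s := F• ∘ s`.  The result is again a connection 1-form, its curvature is
`R_{F•▷s}(h) = d F•(s(ϖ h)) + F•(s(ϖ(π_ε h₁))) ∧ F•(s(ϖ(π_ε h₂)))`, and if `F•`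
is a morphism of differential graded algebras then `F• ∘ R_s = R_{F•▷s}`.
Moreover `(F•, s) ↦ F• ▷ s` is a group action. -/
theorem graded_vertical_automorphisms_act_on_connections
    {H A : Type} [Ring H] [HopfAlgebra k H] [Ring A] [Algebra k A]
    (P : QPB k H A) (DA : DC k A) (DH : DGHopf k (H := H))
    (hDH : DH.IsMaxProlOfBicov) (E : Complete k P.toComodAlg DA DH)
    (s : DH.Ω →ₗ[k] DA.Ω) (hs : IsConnForm E s)
    (F : DA.Ω →ₗ[k] DA.Ω) (hF : IsGradedVertAut E F) :
    IsConnForm E (F ∘ₗ s) ∧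
    (∀ h : H, curvature (F ∘ₗ s) h
      = DA.d (F (s (DH.varpi h))) +
        LinearMap.mul' k DA.Ω (TensorProduct.map (F ∘ₗ s ∘ₗ DH.varpi)
          (F ∘ₗ s ∘ₗ DH.varpi) (Coalgebra.comul (R := k) h))) ∧
    ((∀ x y, F (x * y) = F x * F y) → (∀ x, F (DA.d x) = DA.d (F x)) →
      ∀ h : H, F (curvature s h) = curvature (F ∘ₗ s) h) ∧
    (LinearMap.id ∘ₗ s = s) ∧
    (∀ G : DA.Ω →ₗ[k] DA.Ω, IsGradedVertAut E G → (G ∘ₗ F) ∘ₗ s = G ∘ₗ (F ∘ₗ s)) := by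
  classical
  obtain ⟨hFgr, hFbij, hFbas, hF1, hFcol⟩ := hF
  obtain ⟨hs1, hs2, hs3⟩ := hs
  -- degree-zero part of F
  set F0 : A →ₗ[k] A := DA.p0 ∘ₗ F ∘ₗ DA.ι.toLinearMap with hF0def
  have hFι : ∀ a : A, F (DA.ι a) = DA.ι (F0 a) := by
    intro a
    have hmem : DA.ι a ∈ DA.gr 0 := DA.gr_zero ▸ LinearMap.mem_range_self DA.ι.toLinearMap a
    have hmem' : F (DA.ι a) ∈ DA.gr 0 := hFgr 0 _ hmem
    rw [DA.gr_zero] at hmem'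
    obtain ⟨b, hb⟩ := hmem'
    have : F0 a = b := by
      simp only [hF0def, LinearMap.comp_apply, AlgHom.toLinearMap_apply, ← hb, DCAux.p0_ι]
    rw [this, ← hb]; rfl
  have hp0F : ∀ x : DA.Ω, DA.p0 (F x) = F0 (DA.p0 x) := by
    intro x
    induction x using DirectSum.Decomposition.inductionOn DA.gr with
    | zero => simp
    | @homogeneous i m =>
      match i with
      | 0 =>
        obtain ⟨a, ha⟩ : (m : DA.Ω) ∈ LinearMap.range DA.ι.toLinearMap := DA.gr_zero ▸ m.2
        simp only [← ha, AlgHom.toLinearMap_apply, hFι, DCAux.p0_ι]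
      | (n+1) =>
        simp only [DCAux.p0_succ DA m.2, DCAux.p0_succ DA (hFgr (n+1) _ m.2), map_zero]
    | add x y hx hy =>
      simp only [map_add, hx, hy]
  have hF01 : F0 1 = 1 := by
    have h1 : (1 : DA.Ω) = DA.ι 1 := (map_one DA.ι).symm
    have : F0 1 = DA.p0 (F (DA.ι 1)) := rfl
    rw [this, ← h1, hF1, h1, DCAux.p0_ι]
  -- colinearity of F0
  have hinj : Function.Injective
      (TensorProduct.map DA.ι.toLinearMap DH.ι.toLinearMap) := by
    rw [← LinearMap.rTensor_comp_lTensor]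
    exact (Module.Flat.rTensor_preserves_injective_linearMap _ DA.ι_inj).comp
      (Module.Flat.lTensor_preserves_injective_linearMap _ DH.ι_inj)
  have hmap1 : ∀ u : A ⊗[k] H,
      TensorProduct.map DA.ι.toLinearMap DH.ι.toLinearMap (LinearMap.rTensor H F0 u)
        = LinearMap.rTensor DH.Ω F
          (TensorProduct.map DA.ι.toLinearMap DH.ι.toLinearMap u) := by
    intro u
    induction u using TensorProduct.induction_on with
    | zero => simp only [map_zero]
    | add x y hx hy => simp only [map_add, hx, hy]
    | tmul a b =>
      simp only [LinearMap.rTensor_tmul, TensorProduct.map_tmul, AlgHom.toLinearMap_apply, hFι]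
  have hF0col : ∀ a : A, P.ρ (F0 a) = LinearMap.rTensor H F0 (P.ρ a) := by
    intro a
    apply hinj
    have h1 : TensorProduct.map DA.ι.toLinearMap DH.ι.toLinearMap (P.ρ (F0 a))
        = E.Δc (DA.ι (F0 a)) := (E.Δc_zero (F0 a)).symm
    rw [h1, ← hFι, hFcol, E.Δc_zero, hmap1]
  -- kappa commutes with rTensor F0
  have hkappa : ∀ z : A ⊗[k] DH.Ω,
      kappa P.toComodAlg DH (LinearMap.rTensor DH.Ω F0 z)
        = LinearMap.rTensor DH.Ω F0 (kappa P.toComodAlg DH z) := by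
    intro z
    induction z using TensorProduct.induction_on with
    | zero => simp only [map_zero]
    | add x y hx hy => simp only [map_add, hx, hy]
    | tmul a ω =>
      simp only [LinearMap.rTensor_tmul, kappa, LinearMap.comp_apply]
      rw [hF0col a]
      set w := P.ρ a
      induction w using TensorProduct.induction_on with
      | zero => simp only [LinearMap.map_zero, TensorProduct.zero_tmul]
      | add x y hx hy =>
        simp only [LinearMap.map_add, TensorProduct.add_tmul, LinearMap.rTensor_tmul] at hx hy ⊢
        rw [hx, hy]
      | tmul a0 a1 => simp
  -- piv commutes
  have hmap2 : ∀ u : DA.Ω ⊗[k] DH.Ω,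
      TensorProduct.map DA.p0 LinearMap.id (LinearMap.rTensor DH.Ω F u)
        = LinearMap.rTensor DH.Ω F0 (TensorProduct.map DA.p0 LinearMap.id u) := by
    intro u
    induction u using TensorProduct.induction_on with
    | zero => simp only [map_zero]
    | add x y hx hy => simp only [map_add, hx, hy]
    | tmul a b =>
      simp only [LinearMap.rTensor_tmul, TensorProduct.map_tmul, LinearMap.id_apply, hp0F]
  have hpiv : ∀ x : DA.Ω, E.piv (F x) = LinearMap.rTensor DH.Ω F0 (E.piv x) := by
    intro x
    simp only [Complete.piv, LinearMap.comp_apply, hFcol x]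
    rw [hmap2, hkappa]
  -- ρΩ commutes
  have hmap3 : ∀ u : DA.Ω ⊗[k] DH.Ω,
      LinearMap.lTensor DA.Ω DH.p0 (LinearMap.rTensor DH.Ω F u)
        = LinearMap.rTensor H F (LinearMap.lTensor DA.Ω DH.p0 u) := by
    intro u
    induction u using TensorProduct.induction_on with
    | zero => simp only [map_zero]
    | add x y hx hy => simp only [map_add, hx, hy]
    | tmul a b => simp only [LinearMap.rTensor_tmul, LinearMap.lTensor_tmul]
  have hρΩ : ∀ x : DA.Ω, E.ρΩ (F x) = LinearMap.rTensor H F (E.ρΩ x) := by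
    intro x
    simp only [Complete.ρΩ, LinearMap.comp_apply, hFcol x]
    rw [hmap3]
  have hmap4 : ∀ u : H ⊗[k] (H ⊗[k] H),
      LinearMap.rTensor H F
        (TensorProduct.map (s ∘ₗ DH.varpi)
          (LinearMap.mul' k H ∘ₗ LinearMap.rTensor H (HopfAlgebra.antipode (R := k))) u)
      = TensorProduct.map ((F ∘ₗ s) ∘ₗ DH.varpi)
          (LinearMap.mul' k H ∘ₗ LinearMap.rTensor H (HopfAlgebra.antipode (R := k))) u := by
    intro u
    induction u using TensorProduct.induction_on with
    | zero => simp only [map_zero]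
    | add x y hx hy => simp only [map_add, hx, hy]
    | tmul a b =>
      simp only [LinearMap.rTensor_tmul, TensorProduct.map_tmul, LinearMap.comp_apply]
  have hconn : IsConnForm E (F ∘ₗ s) := by
    refine ⟨fun θ hθ => hFgr 1 _ (hs1 θ hθ), ?_, ?_⟩
    · intro h
      simp only [LinearMap.comp_apply]
      rw [hρΩ, hs2]
      simp only [connRHSg, LinearMap.comp_apply]
      rw [hmap4]
    · intro θ hθ
      simp only [LinearMap.comp_apply]
      rw [hpiv, hs3 θ hθ, LinearMap.rTensor_tmul, hF01]
  refine ⟨hconn, ?_, ?_, LinearMap.id_comp s, fun G _ => (LinearMap.comp_assoc s F G).symm⟩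
  · intro h
    simp only [curvature, LinearMap.add_apply, LinearMap.comp_apply, LinearMap.comp_assoc]
  · intro hmul hd h
    simp only [curvature, LinearMap.add_apply, LinearMap.comp_apply, map_add, hd]
    congr 1
    set z := Coalgebra.comul (R := k) h
    induction z using TensorProduct.induction_on with
    | zero => simp only [map_zero]
    | add x y hx hy => simp only [map_add, hx, hy]
    | tmul h1 h2 =>
      simp only [TensorProduct.map_tmul, LinearMap.mul'_apply, LinearMap.comp_apply, hmul]


end QPBPaper
end
end
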